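/- arXiv:2205.08867 — 2 statements merged into one kernel-verified Lean document; each statement's English description precedes it below -/
import Mathlib

section
/- For (f,g)\in \dot H^1(\mathbb{R}^4)\times L^2(\mathbb{R}^4), 4\mathcal{E}_Z(f,g) \ge \|f\|_{\dot H^1}^2 + (\|g\|_{L^2} - \|Q\|_{\dot H^1}^{-1}\|f\|_{\dot H^1}^2)^2 + \|Q\|_{\dot H^1}^{-2}\|f\|_{\dot H^1}^2(\|Q\|_{\dot H^1}^2 - \|f\|_{\dot H^1}^2). -/
/-!
Expanding the square, `4 E_Z(f,g)` minus the right-hand side equals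
`2 (∫ g |f|² + ‖Q‖⁻¹ ‖g‖₂ ‖f‖²_{Ḣ¹})`, and Cauchy–Schwarz followed by the sharp Sobolev
inequality gives `|∫ g |f|²| ≤ ‖g‖₂ ‖f‖₄² ≤ ‖Q‖⁻¹ ‖g‖₂ ‖f‖²_{Ḣ¹}`.
-/

open MeasureTheory

noncomputable section

abbrev R4 := EuclideanSpace ℝ (Fin 4)

/-- The homogeneous Sobolev norm `‖f‖_{Ḣ¹} = (∫ |∇f|²)^{1/2}`. -/
def H1norm (f : R4 → ℂ) : ℝ := Real.sqrt (∫ x : R4, ‖fderiv ℝ f x‖ ^ 2)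

/-- The `L²` norm of a real-valued function. -/
def L2norm (g : R4 → ℝ) : ℝ := Real.sqrt (∫ x : R4, g x ^ 2)

/-- The `L⁴` norm `(∫ |f|⁴)^{1/4}`. -/
def L4norm (f : R4 → ℂ) : ℝ := (∫ x : R4, ‖f x‖ ^ 4) ^ ((4 : ℝ)⁻¹)

/-- The Zakharov energy `E_Z(f,g) = ∫ ½|∇f|² + ¼|g|² + ½ Re(g)|f|²` (`g` real-valued). -/
def EZ (f : R4 → ℂ) (g : R4 → ℝ) : ℝ :=
  ∫ x : R4, ((1 / 2) * ‖fderiv ℝ f x‖ ^ 2 + (1 / 4) * g x ^ 2 + (1 / 2) * g x * ‖f x‖ ^ 2)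

section CauchySchwarz

variable {α : Type*} [MeasurableSpace α] {μ : Measure α} {f g : α → ℝ}

-- `|f| = √(f²)` is a.e.-strongly measurable even when `f` itself need not be.
lemma memLp_two_abs_of_integrable_sq (hf : Integrable (fun x => f x ^ 2) μ) :
    MemLp (fun x => |f x|) 2 μ := by
  have hm : AEStronglyMeasurable (fun x => |f x|) μ :=
    (Real.continuous_sqrt.comp_aestronglyMeasurable hf.aestronglyMeasurable).congr
      (ae_of_all _ fun x => Real.sqrt_sq_eq_abs (f x))
  exact (memLp_two_iff_integrable_sq hm).2 (by simpa only [sq_abs] using hf)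

lemma integral_abs_mul_abs_le (hf : Integrable (fun x => f x ^ 2) μ)
    (hg : Integrable (fun x => g x ^ 2) μ) :
    ∫ x, |f x| * |g x| ∂μ ≤ √(∫ x, f x ^ 2 ∂μ) * √(∫ x, g x ^ 2 ∂μ) := by
  have two : ENNReal.ofReal 2 = 2 := by norm_num
  have holder := integral_mul_le_Lp_mul_Lq_of_nonneg Real.HolderConjugate.two_two
    (ae_of_all μ fun x => abs_nonneg (f x)) (ae_of_all μ fun x => abs_nonneg (g x))
    (two ▸ memLp_two_abs_of_integrable_sq hf) (two ▸ memLp_two_abs_of_integrable_sq hg)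
  simpa only [Real.rpow_two, sq_abs, ← Real.sqrt_eq_rpow] using holder

lemma neg_sqrt_mul_sqrt_le_integral_mul (hf : Integrable (fun x => f x ^ 2) μ)
    (hg : Integrable (fun x => g x ^ 2) μ) (hfg : Integrable (fun x => f x * g x) μ) :
    -(√(∫ x, f x ^ 2 ∂μ) * √(∫ x, g x ^ 2 ∂μ)) ≤ ∫ x, f x * g x ∂μ := by
  have habs : Integrable (fun x => |f x| * |g x|) μ := by simpa only [abs_mul] using hfg.abs
  calc -(√(∫ x, f x ^ 2 ∂μ) * √(∫ x, g x ^ 2 ∂μ))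
      ≤ -∫ x, |f x| * |g x| ∂μ := neg_le_neg (integral_abs_mul_abs_le hf hg)
    _ = ∫ x, -(|f x| * |g x|) ∂μ := (integral_neg _).symm
    _ ≤ ∫ x, f x * g x ∂μ :=
      integral_mono habs.neg hfg
        fun x => by simpa only [← abs_mul] using neg_abs_le (f x * g x)

end CauchySchwarz

lemma H1norm_sq (f : R4 → ℂ) : H1norm f ^ 2 = ∫ x : R4, ‖fderiv ℝ f x‖ ^ 2 :=
  Real.sq_sqrt (integral_nonneg fun _ => by positivity)

lemma L2norm_sq (g : R4 → ℝ) : L2norm g ^ 2 = ∫ x : R4, g x ^ 2 :=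
  Real.sq_sqrt (integral_nonneg fun _ => by positivity)

lemma L4norm_sq (f : R4 → ℂ) : L4norm f ^ 2 = √(∫ x : R4, ‖f x‖ ^ 4) := by
  have h0 : 0 ≤ ∫ x : R4, ‖f x‖ ^ 4 := integral_nonneg fun _ => by positivity
  rw [L4norm, ← Real.rpow_natCast, ← Real.rpow_mul h0, Real.sqrt_eq_rpow]
  norm_num

lemma EZ_eq_of_integrable {f : R4 → ℂ} {g : R4 → ℝ}
    (hf1 : Integrable (fun x : R4 => ‖fderiv ℝ f x‖ ^ 2))
    (hg2 : Integrable (fun x : R4 => g x ^ 2))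
    (hfg : Integrable (fun x : R4 => g x * ‖f x‖ ^ 2)) :
    EZ f g = (1 / 2) * (∫ x : R4, ‖fderiv ℝ f x‖ ^ 2) + (1 / 4) * (∫ x : R4, g x ^ 2)
      + (1 / 2) * ∫ x : R4, g x * ‖f x‖ ^ 2 := by
  simp_rw [EZ, mul_assoc]
  rw [integral_add, integral_add, integral_const_mul, integral_const_mul, integral_const_mul]
  · exact hf1.const_mul _
  · exact hg2.const_mul _
  · exact (hf1.const_mul _).add (hg2.const_mul _)
  · exact hfg.const_mul _

lemma neg_L2norm_mul_L4norm_sq_le_integral {f : R4 → ℂ} {g : R4 → ℝ}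
    (hf4 : Integrable (fun x : R4 => ‖f x‖ ^ 4))
    (hg2 : Integrable (fun x : R4 => g x ^ 2))
    (hfg : Integrable (fun x : R4 => g x * ‖f x‖ ^ 2)) :
    -(L2norm g * L4norm f ^ 2) ≤ ∫ x : R4, g x * ‖f x‖ ^ 2 := by
  have hsq : ∀ x, (‖f x‖ ^ 2) ^ 2 = ‖f x‖ ^ 4 := fun x => by ring
  have := neg_sqrt_mul_sqrt_le_integral_mul hg2 (by simpa only [hsq] using hf4) hfg
  simpa only [L4norm_sq, L2norm, hsq] using this

/-- The lower bound
,
with `Qn` denoting ‖Q‖_{Ḣ¹} and the sharp Sobolev inequality assumed. -/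
theorem energy_lower_bound_refined (f : R4 → ℂ) (g : R4 → ℝ) (Qn : ℝ) (hQn : 0 < Qn)
    (hf1 : Integrable (fun x : R4 => ‖fderiv ℝ f x‖ ^ 2))
    (hf4 : Integrable (fun x : R4 => ‖f x‖ ^ 4))
    (hg2 : Integrable (fun x : R4 => g x ^ 2))
    (hfg : Integrable (fun x : R4 => g x * ‖f x‖ ^ 2))
    (hSob : L4norm f ^ 2 ≤ Qn⁻¹ * H1norm f ^ 2)
    :
    H1norm f ^ 2 + (L2norm g - Qn⁻¹ * H1norm f ^ 2) ^ 2
        + Qn⁻¹ ^ 2 * H1norm f ^ 2 * (Qn ^ 2 - H1norm f ^ 2) ≤ 4 * EZ f g := by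
  have hcoupling : -(L2norm g * (Qn⁻¹ * H1norm f ^ 2)) ≤ ∫ x : R4, g x * ‖f x‖ ^ 2 :=
    (neg_le_neg (mul_le_mul_of_nonneg_left hSob (Real.sqrt_nonneg _))).trans
      (neg_L2norm_mul_L4norm_sq_le_integral hf4 hg2 hfg)
  have hexpand : H1norm f ^ 2 + (L2norm g - Qn⁻¹ * H1norm f ^ 2) ^ 2
      + Qn⁻¹ ^ 2 * H1norm f ^ 2 * (Qn ^ 2 - H1norm f ^ 2)
      = 2 * H1norm f ^ 2 + L2norm g ^ 2 - 2 * (L2norm g * (Qn⁻¹ * H1norm f ^ 2)) := by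
    field_simp
    ring
  rw [hexpand, EZ_eq_of_integrable hf1 hg2 hfg, ← H1norm_sq, ← L2norm_sq]
  linarith
end
end

section
/- For f \in \dot H^1(\mathbb{R}^4) with 4\mathcal{E}_{NLS}(f) < \|Q\|_{\dot H^1}^2, one has \mathcal{K}(f) = 0 if and only if f = 0. -/
open MeasureTheory

noncomputable section

/-- The NLS energy. -/
def ENLS (f : R4 → ℂ) : ℝ :=
  ∫ x : R4, ((1 / 2) * ‖fderiv ℝ f x‖ ^ 2 - (1 / 4) * ‖f x‖ ^ 4)

/-- The functional K(f) = ‖f‖_{Ḣ¹}² - ‖f‖_{L⁴}⁴. -/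
def Kfun (f : R4 → ℂ) : ℝ := H1norm f ^ 2 - L4norm f ^ 4

/-!
Write `A = ‖f‖_{Ḣ¹}²` and `B = ‖f‖_{L⁴}⁴`. If `K(f) = 0` then `A = B`, so `4 E(f) = 2A - B = B`
and the energy bound reads `B < Q²`. Sobolev gives `√B ≤ Q⁻¹ B`, hence `Q ≤ √B` unless `B = 0`;
hence `B = 0` and `f = 0` a.e. Conversely, a function vanishing a.e. vanishes on a dense set, so
wherever it is differentiable its derivative is `0`, and elsewhere `fderiv` is `0` by convention.
-/

section Derivative

variable {𝕜 E F : Type*} [NontriviallyNormedField 𝕜] [NormedAddCommGroup E] [NormedSpace 𝕜 E]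
  [NormedAddCommGroup F] [NormedSpace 𝕜 F]

theorem fderiv_eq_zero_of_eqOn_zero_of_dense {f : E → F} {s : Set E} (hs : Dense s)
    (hf : Set.EqOn f 0 s) (x : E) : fderiv 𝕜 f x = 0 := by
  by_cases hd : DifferentiableAt 𝕜 f x
  · have hunique : UniqueDiffWithinAt 𝕜 s x :=
      uniqueDiffWithinAt_univ.mono_closure (by rw [hs.closure_eq])
    have hfx : f x = 0 := by
      simpa using hd.continuousAt.continuousWithinAt.mem_closure (hs x)
        (t := {0}) fun y hy => hf hy
    have hzero : HasFDerivWithinAt f (0 : E →L[𝕜] F) s x :=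
      (hasFDerivWithinAt_const (0 : F) x s).congr (fun y hy => hf hy) hfx
    exact hunique.eq hd.hasFDerivAt.hasFDerivWithinAt hzero
  · exact fderiv_zero_of_not_differentiableAt hd

theorem fderiv_eq_zero_of_ae_eq_zero [MeasurableSpace E] {μ : Measure E} [μ.IsOpenPosMeasure]
    {f : E → F} (hf : f =ᵐ[μ] 0) (x : E) : fderiv 𝕜 f x = 0 :=
  fderiv_eq_zero_of_eqOn_zero_of_dense (Measure.dense_of_ae hf) (fun _ hy => hy) x

end Derivative

theorem ae_eq_zero_of_integral_norm_pow_eq_zero {α F : Type*} [MeasurableSpace α] {μ : Measure α}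
    [NormedAddCommGroup F] {f : α → F} {p : ℕ} (hp : p ≠ 0)
    (hf : Integrable (fun x => ‖f x‖ ^ p) μ) (h : ∫ x, ‖f x‖ ^ p ∂μ = 0) : f =ᵐ[μ] 0 := by
  filter_upwards [(integral_eq_zero_iff_of_nonneg (fun x => by positivity) hf).mp h] with x hx
  simpa [hp] using hx

theorem eq_zero_of_sqrt_le_inv_mul_of_lt_sq {B Q : ℝ} (hB : 0 ≤ B) (hSob : √B ≤ Q⁻¹ * B)
    (hlt : B < Q ^ 2) : B = 0 := by
  by_contra hne
  have hsqrt : 0 < √B := Real.sqrt_pos.mpr (lt_of_le_of_ne hB (Ne.symm hne))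
  have hQ : 0 < Q := inv_pos.mp (pos_of_mul_pos_left (hsqrt.trans_le hSob) hB)
  have hQ_le : Q ≤ √B := by
    refine le_of_mul_le_mul_right ?_ hsqrt
    calc Q * √B ≤ Q * (Q⁻¹ * B) := mul_le_mul_of_nonneg_left hSob hQ.le
      _ = √B * √B := by rw [mul_inv_cancel_left₀ hQ.ne', Real.mul_self_sqrt hB]
  nlinarith [Real.sq_sqrt hB]

theorem sq_H1norm (f : R4 → ℂ) : H1norm f ^ 2 = ∫ x, ‖fderiv ℝ f x‖ ^ 2 :=
  Real.sq_sqrt (integral_nonneg fun _ => by positivity)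

theorem L4norm_rpow {f : R4 → ℂ} (n : ℕ) :
    L4norm f ^ n = (∫ x, ‖f x‖ ^ 4) ^ ((n : ℝ) / 4) := by
  rw [L4norm, ← Real.rpow_natCast, ← Real.rpow_mul (integral_nonneg fun _ => by positivity)]
  ring_nf

theorem Kfun_eq (f : R4 → ℂ) : Kfun f = (∫ x, ‖fderiv ℝ f x‖ ^ 2) - ∫ x, ‖f x‖ ^ 4 := by
  rw [Kfun, sq_H1norm, L4norm_rpow]
  norm_num

theorem ENLS_eq {f : R4 → ℂ} (hf1 : Integrable (fun x : R4 => ‖fderiv ℝ f x‖ ^ 2))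
    (hf4 : Integrable (fun x : R4 => ‖f x‖ ^ 4)) :
    ENLS f = (1 / 2) * (∫ x, ‖fderiv ℝ f x‖ ^ 2) - (1 / 4) * ∫ x, ‖f x‖ ^ 4 := by
  rw [ENLS, integral_sub (hf1.const_mul _) (hf4.const_mul _), integral_const_mul,
    integral_const_mul]

theorem K_zero_iff_zero_general (f : R4 → ℂ) (Qn : ℝ)
    (hf1 : Integrable (fun x : R4 => ‖fderiv ℝ f x‖ ^ 2))
    (hf4 : Integrable (fun x : R4 => ‖f x‖ ^ 4))
    (hSob : L4norm f ^ 2 ≤ Qn⁻¹ * H1norm f ^ 2)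
    (hE : 4 * ENLS f < Qn ^ 2) :
    Kfun f = 0 ↔ f =ᵐ[volume] 0 := by
  constructor
  · intro hK
    rw [Kfun_eq, sub_eq_zero] at hK
    have hsq : L4norm f ^ 2 = √(∫ x, ‖f x‖ ^ 4) := by
      rw [L4norm_rpow, Real.sqrt_eq_rpow]
      norm_num
    rw [hsq, sq_H1norm, hK] at hSob
    rw [ENLS_eq hf1 hf4, hK] at hE
    refine ae_eq_zero_of_integral_norm_pow_eq_zero four_ne_zero hf4 ?_
    exact eq_zero_of_sqrt_le_inv_mul_of_lt_sq (integral_nonneg fun _ => by positivity) hSob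
      (by linarith)
  · intro hf
    have hgrad : (fun x => ‖fderiv ℝ f x‖ ^ 2) = fun _ => (0 : ℝ) := by
      funext x
      simp [fderiv_eq_zero_of_ae_eq_zero hf x]
    have hpow : (fun x => ‖f x‖ ^ 4) =ᵐ[volume] fun _ => (0 : ℝ) := by
      filter_upwards [hf] with x hx
      simp [hx]
    rw [Kfun_eq, hgrad, integral_congr_ae hpow, sub_self]

/-- Below the ground state energy, K(f) = 0 if and only if f = 0. -/
theorem K_zero_iff_zero (f : R4 → ℂ) (Qn : ℝ) (hQn : 0 < Qn)
    (hf1 : Integrable (fun x : R4 => ‖fderiv ℝ f x‖ ^ 2))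
    (hf4 : Integrable (fun x : R4 => ‖f x‖ ^ 4))
    (hSob : L4norm f ^ 2 ≤ Qn⁻¹ * H1norm f ^ 2)
    (hE : 4 * ENLS f < Qn ^ 2) :
    Kfun f = 0 ↔ f =ᵐ[volume] 0 :=
  K_zero_iff_zero_general f Qn hf1 hf4 hSob hE
end
end
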